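/- arXiv:1004.3321 — 2 statements merged into one kernel-verified Lean document; each statement's English description precedes it below -/
import Mathlib

section
/- Let d ≥ 1 and let β ∈ {0,1}^d be nonzero with |β| = Σᵢ βᵢ. Define g_β(r,t) ∈ ℤ^{{0,1}^d} by g_β(r,t)_a = r if β·a is even and t if β·a is odd. Then the vector g_β(d, d-|β|) - d·𝟙 has order 2|β|+1 in the cokernel of the transpose of the reduced Laplacian of the cone c(Q_d), i.e., (2|β|+1)·(g_β(d,d-|β|) - d·𝟙) ∈ Im L(c(Q_d),s)^T and k·(g_β(d,d-|β|) - d·𝟙) ∉ Im L(c(Q_d),s)^T for 1 ≤ k ≤ 2|β|. -/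
/-!
The parity character `χ_β a = (-1) ^ (β ⬝ᵥ a)` of `(ZMod 2)^d` is an eigenvector of
`L(Q_d) + I` with eigenvalue `2|β| + 1`, the constant vector `𝟙` has eigenvalue `1`, and
`2 w = |β| (χ_β - 𝟙)` for `w = g_β(d, d - |β|) - d 𝟙`. Hence `(L + I)(w - |β|² 𝟙) = (2|β| + 1) w`.
Conversely, pairing with `χ_β` maps the image of `(L + I)ᵀ` into `(2|β| + 1) ℤ`, while
`2 (χ_β ⬝ᵥ w) = |β| 2^d` since `χ_β ⬝ᵥ χ_β = 2^d` and `∑ χ_β = 0` for `β ≠ 0`. As `2|β| + 1` is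
coprime to `|β| 2^d`, `k w` lies in the image only if `2|β| + 1 ∣ k`.
-/

open Matrix

/-- The Laplacian matrix of the hypercube `Q_d`, with vertex set `{0,1}^d` and
edges between vectors differing in exactly one coordinate. -/
def cubeLap (d : ℕ) : Matrix (Fin d → ZMod 2) (Fin d → ZMod 2) ℤ := fun a b =>
  if a = b then (d : ℤ)
  else if (Finset.univ.filter fun i => a i ≠ b i).card = 1 then -1 else 0

open Finset

section HammingZMod2

variable {ι : Type*} [Fintype ι] [DecidableEq ι]

lemma hammingNorm_eq_one_iff_exists_single {x : ι → ZMod 2} :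
    hammingNorm x = 1 ↔ ∃ i, Pi.single i 1 = x := by
  constructor
  · intro h
    obtain ⟨i, hi⟩ := card_eq_one.mp h
    refine ⟨i, funext fun j => ?_⟩
    have hj : x j ≠ 0 ↔ j = i := by simpa using Finset.ext_iff.mp hi j
    rcases eq_or_ne j i with rfl | hji
    · have : ∀ y : ZMod 2, y ≠ 0 → 1 = y := by decide
      simpa using this _ (hj.mpr rfl)
    · simpa [hji] using (not_not.mp (mt hj.mp hji)).symm
  · rintro ⟨i, rfl⟩
    rw [hammingNorm, card_eq_one]
    exact ⟨i, by ext j; by_cases j = i <;> simp_all⟩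

lemma sum_hammingDist_eq_one {M : Type*} [AddCommMonoid M] (f : (ι → ZMod 2) → M)
    (a : ι → ZMod 2) :
    ∑ b with hammingDist a b = 1, f b = ∑ i, f (a + Pi.single i 1) := by
  have hsingle : ({x | hammingNorm x = 1} : Finset (ι → ZMod 2)) =
      univ.image fun i => Pi.single i 1 := by
    ext x
    simp [hammingNorm_eq_one_iff_exists_single]
  have hinj : Function.Injective fun i : ι => (Pi.single i 1 : ι → ZMod 2) :=
    fun i j h => by simpa [Pi.single_apply] using congrFun h i
  rw [sum_filter, ← Equiv.sum_comp (Equiv.addLeft a)]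
  simp only [Equiv.coe_addLeft, hammingDist_eq_hammingNorm, neg_add_cancel_left]
  rw [← sum_filter, hsingle, sum_image hinj.injOn]

end HammingZMod2

section ParityChar

variable {ι : Type*} [Fintype ι]

def parityChar (β : ι → ZMod 2) : AddChar (ι → ZMod 2) ℤ :=
  (AddChar.zmodChar 2 (ζ := -1) (by norm_num : (-1 : ℤ) ^ 2 = 1)).compAddMonoidHom
    (AddMonoidHom.mk' (β ⬝ᵥ ·) (dotProduct_add β))

lemma parityChar_apply (β a : ι → ZMod 2) : parityChar β a = (-1) ^ (β ⬝ᵥ a).val :=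
  rfl

lemma parityChar_apply_eq_neg_one_pow_sum (β a : ι → ZMod 2) :
    parityChar β a = (-1) ^ ∑ i, (β i).val * (a i).val := by
  have h : β ⬝ᵥ a = ((∑ i, (β i).val * (a i).val : ℕ) : ZMod 2) := by
    simp [dotProduct]
  rw [parityChar_apply, h, ZMod.val_natCast, ← neg_one_pow_eq_pow_mod_two]

lemma parityChar_single [DecidableEq ι] (β : ι → ZMod 2) (i : ι) :
    parityChar β (Pi.single i 1) = (-1) ^ (β i).val := by
  rw [parityChar_apply, dotProduct_single, mul_one]

lemma parityChar_ne_one [DecidableEq ι] {β : ι → ZMod 2} (hβ : β ≠ 0) : parityChar β ≠ 1 := by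
  obtain ⟨i, hi⟩ := Function.ne_iff.mp hβ
  have hi1 : β i = 1 := by
    have : ∀ x : ZMod 2, x ≠ 0 → x = 1 := by decide
    exact this _ hi
  refine AddChar.ne_one_iff.mpr ⟨Pi.single i 1, ?_⟩
  rw [parityChar_single, hi1, ZMod.val_one]
  norm_num

lemma parityChar_dotProduct_self [DecidableEq ι] (β : ι → ZMod 2) :
    parityChar β ⬝ᵥ parityChar β = 2 ^ Fintype.card ι := by
  simp [dotProduct, parityChar_apply, ← mul_pow]

end ParityChar

section CubeLap

variable {d : ℕ}

lemma cubeLap_apply (a b : Fin d → ZMod 2) :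
    cubeLap d a b = (if a = b then (d : ℤ) else 0) - if hammingDist a b = 1 then 1 else 0 := by
  unfold cubeLap hammingDist
  split_ifs <;> simp_all

lemma cubeLap_transpose : (cubeLap d)ᵀ = cubeLap d := by
  ext a b
  simp [cubeLap_apply, eq_comm, hammingDist_comm]

lemma cubeLap_mulVec (v : (Fin d → ZMod 2) → ℤ) (a : Fin d → ZMod 2) :
    (cubeLap d *ᵥ v) a = d * v a - ∑ i, v (a + Pi.single i 1) := by
  simp only [mulVec, dotProduct, cubeLap_apply, sub_mul, ite_mul, one_mul, zero_mul,
    sum_sub_distrib, sum_ite_eq, mem_univ, if_true, ← sum_filter, sum_hammingDist_eq_one]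

lemma cubeLap_mulVec_addChar (ψ : AddChar (Fin d → ZMod 2) ℤ) :
    cubeLap d *ᵥ ψ = (∑ i, (1 - ψ (Pi.single i 1))) • ⇑ψ := by
  ext a
  simp only [cubeLap_mulVec, AddChar.map_add_eq_mul, Pi.smul_apply, smul_eq_mul,
    sum_sub_distrib, sum_const, card_univ, Fintype.card_fin, nsmul_eq_mul, mul_one,
    ← mul_sum]
  ring

lemma cubeLap_add_one_mulVec_parityChar (β : Fin d → ZMod 2) :
    (cubeLap d + 1) *ᵥ parityChar β =
      (2 * ∑ i, ((β i).val : ℤ) + 1) • ⇑(parityChar β) := by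
  have hval : ∀ x : ZMod 2, (1 : ℤ) - (-1) ^ x.val = 2 * x.val := by decide
  simp only [add_mulVec, one_mulVec, cubeLap_mulVec_addChar, parityChar_single, hval,
    ← mul_sum, add_smul, one_smul]

lemma cubeLap_add_one_mulVec_one : (cubeLap d + 1) *ᵥ 1 = 1 := by
  ext a
  simp [add_mulVec, cubeLap_mulVec]

end CubeLap

section EigenvectorPairing

variable {n R : Type*} [Fintype n] [CommSemiring R] {A : Matrix n n R} {u : n → R} {c : R}

lemma dotProduct_transpose_mulVec_of_mulVec_eq_smul (hu : A *ᵥ u = c • u) (x : n → R) :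
    u ⬝ᵥ (Aᵀ *ᵥ x) = c * (u ⬝ᵥ x) := by
  rw [dotProduct_mulVec, vecMul_transpose, hu, smul_dotProduct, smul_eq_mul]

lemma dvd_dotProduct_of_mem_range_toLin'_transpose [DecidableEq n] (hu : A *ᵥ u = c • u)
    {y : n → R} (hy : y ∈ LinearMap.range (toLin' Aᵀ)) : c ∣ u ⬝ᵥ y := by
  obtain ⟨x, rfl⟩ := hy
  rw [toLin'_apply, dotProduct_transpose_mulVec_of_mulVec_eq_smul hu]
  exact dvd_mul_right c _

end EigenvectorPairing

section OddParityVector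

variable {d : ℕ} {β : Fin d → ZMod 2} {w : (Fin d → ZMod 2) → ℤ}

lemma cubeLap_add_one_mulVec_sub_sq_smul_one
    (hw : (2 : ℤ) • w = (∑ i, ((β i).val : ℤ)) • (⇑(parityChar β) - 1)) :
    (cubeLap d + 1) *ᵥ (w - (∑ i, ((β i).val : ℤ)) ^ 2 • 1) =
      (2 * ∑ i, ((β i).val : ℤ) + 1) • w := by
  set m := ∑ i, ((β i).val : ℤ)
  set χ := ⇑(parityChar β)
  apply smul_right_injective _ (two_ne_zero (α := ℤ))
  calc (2 : ℤ) • ((cubeLap d + 1) *ᵥ (w - m ^ 2 • 1))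
      = (cubeLap d + 1) *ᵥ ((2 : ℤ) • w - (2 * m ^ 2) • 1) := by
        rw [← mulVec_smul]; congr 1; module
    _ = m • ((2 * m + 1) • χ - 1) - (2 * m ^ 2) • 1 := by
        rw [hw, mulVec_sub, mulVec_smul, mulVec_smul, mulVec_sub,
          cubeLap_add_one_mulVec_parityChar, cubeLap_add_one_mulVec_one]
    _ = (2 * m + 1) • (m • (χ - 1)) := by module
    _ = (2 : ℤ) • ((2 * m + 1) • w) := by rw [← hw]; module

lemma dvd_of_smul_mem_range_cubeLap_add_one_transpose (hβ : β ≠ 0)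
    (hw : (2 : ℤ) • w = (∑ i, ((β i).val : ℤ)) • (⇑(parityChar β) - 1)) {k : ℤ}
    (hk : k • w ∈ LinearMap.range (toLin' (cubeLap d + 1)ᵀ)) :
    2 * ∑ i, ((β i).val : ℤ) + 1 ∣ k := by
  set m := ∑ i, ((β i).val : ℤ)
  have hpair : 2 * (parityChar β ⬝ᵥ (k • w)) = k * (m * 2 ^ d) := by
    rw [dotProduct_smul, smul_eq_mul, mul_left_comm, ← smul_eq_mul (2 : ℤ), ← dotProduct_smul,
      hw, dotProduct_smul, dotProduct_sub, parityChar_dotProduct_self, dotProduct_one,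
      AddChar.sum_eq_zero_of_ne_one (parityChar_ne_one hβ), Fintype.card_fin]
    simp
  have hcop : IsCoprime (2 * m + 1) (m * 2 ^ d) :=
    IsCoprime.mul_right ⟨1, -2, by ring⟩ (IsCoprime.pow_right ⟨1, -m, by ring⟩)
  refine hcop.dvd_of_dvd_mul_right (hpair ▸ dvd_mul_of_dvd_right ?_ 2)
  exact dvd_dotProduct_of_mem_range_toLin'_transpose (cubeLap_add_one_mulVec_parityChar β) hk

end OddParityVector

theorem stmt12_general (d : ℕ) (β : Fin d → ZMod 2) (hβ : β ≠ 0) :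
    let bnorm : ℕ := ∑ i, (β i).val
    let g : (Fin d → ZMod 2) → ℤ := fun a =>
      if Even (∑ i, (β i).val * (a i).val) then (d : ℤ) else (d : ℤ) - bnorm
    let w : (Fin d → ZMod 2) → ℤ := g - (d : ℤ) • 1
    let Λ := LinearMap.range (Matrix.toLin' (cubeLap d + 1)ᵀ)
    (((2 * bnorm + 1 : ℕ) : ℤ) • w ∈ Λ) ∧
      ∀ k : ℕ, 1 ≤ k → k ≤ 2 * bnorm → (k : ℤ) • w ∉ Λ := by
  intro bnorm g w Λ
  have hm : (bnorm : ℤ) = ∑ i, ((β i).val : ℤ) := Nat.cast_sum _ _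
  have hw : (2 : ℤ) • w = (∑ i, ((β i).val : ℤ)) • (⇑(parityChar β) - 1) := by
    ext a
    simp only [w, g, Pi.smul_apply, Pi.sub_apply, Pi.one_apply, smul_eq_mul,
      parityChar_apply_eq_neg_one_pow_sum, ← hm]
    split_ifs with h
    · rw [h.neg_one_pow]; ring
    · rw [(Nat.not_even_iff_odd.mp h).neg_one_pow]; ring
  refine ⟨⟨w - (bnorm : ℤ) ^ 2 • 1, ?_⟩, fun k hk1 hk2 hk => ?_⟩
  · rw [toLin'_apply, transpose_add, transpose_one, cubeLap_transpose, hm,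
      cubeLap_add_one_mulVec_sub_sq_smul_one hw, ← hm]
    norm_cast
  · have := Int.le_of_dvd (by omega) (dvd_of_smul_mem_range_cubeLap_add_one_transpose hβ hw hk)
    omega

/-- For nonzero `β ∈ {0,1}^d`, the vector `g_β(d, d-|β|) - d·𝟙`, where
`g_β(r,t)_a = r` if `β·a` is even and `t` if odd, has order `2|β|+1` in the
cokernel of the transpose of the reduced Laplacian `L(Q_d) + I` of the cone
`c(Q_d)`. -/
theorem stmt12 (d : ℕ) (hd : 1 ≤ d) (β : Fin d → ZMod 2) (hβ : β ≠ 0) :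
    let bnorm : ℕ := ∑ i, (β i).val
    let g : (Fin d → ZMod 2) → ℤ := fun a =>
      if Even (∑ i, (β i).val * (a i).val) then (d : ℤ) else (d : ℤ) - bnorm
    let w : (Fin d → ZMod 2) → ℤ := g - (d : ℤ) • 1
    let Λ := LinearMap.range (Matrix.toLin' (cubeLap d + 1)ᵀ)
    (((2 * bnorm + 1 : ℕ) : ℤ) • w ∈ Λ) ∧
      ∀ k : ℕ, 1 ≤ k → k ≤ 2 * bnorm → (k : ℤ) • w ∉ Λ :=
  stmt12_general d β hβ
end

section
/- Let A be an n×n integer matrix with det A ≠ 0, let m ∈ ℤ, and set B = A + m·I. Then for every prime p not dividing m, the p-primary component of ℤⁿ/Im(A·B) is isomorphic to the direct sum of the p-primary components of ℤⁿ/Im(A) and ℤⁿ/Im(B). -/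
/-!
With `B = A + m • 1`, the natural map `ℤⁿ/Im(AB) → ℤⁿ/Im A × ℤⁿ/Im B` has kernel
and cokernel killed by `m`: since `A` and `B` commute, `v ∈ Im A ∩ Im B` gives
`m v = Bv - Av ∈ Im(AB)`, and `Bu - Aw` maps to `m • (u, w)`. Multiplication by `m` is
invertible on `p`-primary parts when `p ∤ m`, so the map restricts to an isomorphism of
`p`-primary components.
-/

open Matrix

namespace AddCommGroup

variable {G H : Type*} [AddCommGroup G] [AddCommGroup H]

def primaryComponentMap (φ : G →+ H) (p : ℕ) :
    primaryComponent G p →+ primaryComponent H p :=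
  (φ.comp (primaryComponent G p).subtype).codRestrict _ fun ⟨x, k, hk⟩ =>
    ⟨k, by simp [← map_nsmul, hk]⟩

theorem zsmul_eq_self_of_nsmul_eq_zero {p k : ℕ} {a b m : ℤ}
    (hab : a * (p : ℤ) ^ k + b * m = 1) {y : G} (hy : p ^ k • y = 0) : (b * m) • y = y := by
  have hy' : ((p : ℤ) ^ k) • y = 0 := by exact_mod_cast hy
  calc (b * m) • y = (a * (p : ℤ) ^ k + b * m) • y := by
        rw [add_smul, mul_smul a, hy', smul_zero, zero_add]
    _ = y := by rw [hab, one_smul]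

theorem primaryComponentMap_bijective {φ : G →+ H} {p : ℕ} {m : ℤ}
    (hpm : IsCoprime (p : ℤ) m) (hker : ∀ x, φ x = 0 → m • x = 0)
    (hrange : ∀ y, ∃ x, φ x = m • y) :
    Function.Bijective (primaryComponentMap φ p) := by
  constructor
  · rw [injective_iff_map_eq_zero]
    rintro ⟨x, hxp⟩ hx
    obtain ⟨k, hk⟩ := hxp
    obtain ⟨a, b, hab⟩ := hpm.pow_left (m := k)
    ext1
    calc x = (b * m) • x := (zsmul_eq_self_of_nsmul_eq_zero hab hk).symm
      _ = 0 := by rw [mul_smul, hker x (congrArg Subtype.val hx), smul_zero]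
  · rintro ⟨y, hyp⟩
    obtain ⟨k, hk⟩ := hyp
    obtain ⟨a, b, hab⟩ := hpm.pow_left (m := k)
    obtain ⟨x, hx⟩ := hrange y
    -- `x` is only killed by `m * p ^ k`; multiplying by `b * m` removes the `m`-torsion.
    have hmx : m • p ^ k • x = 0 :=
      hker _ (by rw [map_nsmul, hx, smul_comm, hk, smul_zero])
    refine ⟨⟨(b * (b * m)) • x, k, ?_⟩, ?_⟩
    · rw [smul_comm, mul_smul, mul_smul, hmx, smul_zero, smul_zero]
    · ext1
      calc φ ((b * (b * m)) • x) = (b * m) • (b * m) • y := by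
            rw [map_zsmul, hx, ← mul_smul, ← mul_smul]; ring_nf
        _ = y := by
          rw [zsmul_eq_self_of_nsmul_eq_zero hab hk, zsmul_eq_self_of_nsmul_eq_zero hab hk]

end AddCommGroup

namespace Module.End

variable {R M : Type*} [Ring R] [AddCommGroup M] [Module R M] {f g : Module.End R M}

theorem range_mul_le_range_left (f g : Module.End R M) :
    LinearMap.range (f * g) ≤ LinearMap.range f :=
  LinearMap.range_comp_le_range g f

theorem range_mul_le_range_right (hfg : Commute f g) :
    LinearMap.range (f * g) ≤ LinearMap.range g :=
  hfg.eq ▸ range_mul_le_range_left g f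

variable (f g) in
def quotientRangeMulToProd (hfg : Commute f g) :
    M ⧸ LinearMap.range (f * g) →ₗ[R]
      (M ⧸ LinearMap.range f) × (M ⧸ LinearMap.range g) :=
  (Submodule.factor (range_mul_le_range_left f g)).prod
    (Submodule.factor (range_mul_le_range_right hfg))

@[simp]
theorem quotientRangeMulToProd_mk (hfg : Commute f g) (x : M) :
    quotientRangeMulToProd f g hfg (Submodule.Quotient.mk x) =
      (Submodule.Quotient.mk x, Submodule.Quotient.mk x) :=
  rfl

theorem commute_of_sub_eq_smul_one {m : ℤ} (hgf : g - f = m • 1) : Commute f g := by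
  rw [← sub_add_cancel g f, hgf]
  exact ((Commute.one_right f).smul_right m).add_right (Commute.refl f)

theorem smul_eq_zero_of_quotientRangeMulToProd_eq_zero {m : ℤ} (hgf : g - f = m • 1)
    {x : M ⧸ LinearMap.range (f * g)}
    (hx : quotientRangeMulToProd f g (commute_of_sub_eq_smul_one hgf) x = 0) : m • x = 0 := by
  obtain ⟨v, rfl⟩ := Submodule.Quotient.mk_surjective _ x
  simp only [quotientRangeMulToProd_mk, Prod.mk_eq_zero, Submodule.Quotient.mk_eq_zero] at hx
  obtain ⟨⟨s, rfl⟩, ⟨t, hv⟩⟩ := hx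
  rw [← Submodule.Quotient.mk_smul, Submodule.Quotient.mk_eq_zero]
  refine ⟨s - t, ?_⟩
  calc (f * g) (s - t) = (g * f) s - f (g t) := by
        rw [map_sub, Module.End.mul_apply f g t, (commute_of_sub_eq_smul_one hgf).eq]
    _ = (g - f) (f s) := by rw [hv]; rfl
    _ = m • f s := by rw [hgf]; simp

theorem exists_quotientRangeMulToProd_eq_smul {m : ℤ} (hgf : g - f = m • 1)
    (y : (M ⧸ LinearMap.range f) × (M ⧸ LinearMap.range g)) :
    ∃ x, quotientRangeMulToProd f g (commute_of_sub_eq_smul_one hgf) x = m • y := by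
  obtain ⟨y₁, y₂⟩ := y
  obtain ⟨u, rfl⟩ := Submodule.Quotient.mk_surjective _ y₁
  obtain ⟨w, rfl⟩ := Submodule.Quotient.mk_surjective _ y₂
  have hg : ∀ x, g x = f x + m • x := fun x => by
    rw [← sub_eq_iff_eq_add', ← LinearMap.sub_apply, hgf]; simp
  refine ⟨Submodule.Quotient.mk (g u - f w), ?_⟩
  simp only [quotientRangeMulToProd_mk, Prod.smul_mk, ← Submodule.Quotient.mk_smul,
    Prod.mk.injEq, Submodule.Quotient.eq]
  constructor
  · exact ⟨u - w, by rw [map_sub, hg]; abel⟩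
  · exact ⟨u - w, by simp only [map_sub, hg, smul_sub]; abel⟩

end Module.End

theorem stmt18_general (n : ℕ) (A : Matrix (Fin n) (Fin n) ℤ) (m : ℤ)
    (p : ℕ) [Fact p.Prime] (hpm : ¬ (p : ℤ) ∣ m) :
    Nonempty
      ((AddCommGroup.primaryComponent
          ((Fin n → ℤ) ⧸ LinearMap.range (Matrix.toLin' (A * (A + m • 1)))) p) ≃+
        (AddCommGroup.primaryComponent
          (((Fin n → ℤ) ⧸ LinearMap.range (Matrix.toLin' A)) ×
            ((Fin n → ℤ) ⧸ LinearMap.range (Matrix.toLin' (A + m • 1)))) p)) := by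
  have hgf : toLin' (A + m • 1) - toLin' A = m • 1 := by
    rw [map_add, map_smul, toLin'_one, add_sub_cancel_left, Module.End.one_eq_id]
  have hcop : IsCoprime (p : ℤ) m :=
    (Nat.prime_iff_prime_int.mp Fact.out).coprime_iff_not_dvd.mpr hpm
  rw [toLin'_mul, ← Module.End.mul_eq_comp]
  let Φ := Module.End.quotientRangeMulToProd _ _ (Module.End.commute_of_sub_eq_smul_one hgf)
  exact ⟨AddEquiv.ofBijective (AddCommGroup.primaryComponentMap Φ.toAddMonoidHom p) <|
    AddCommGroup.primaryComponentMap_bijective hcop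
      (fun _ => Module.End.smul_eq_zero_of_quotientRangeMulToProd_eq_zero hgf)
      (Module.End.exists_quotientRangeMulToProd_eq_smul hgf)⟩

/-- Matrix form of the splitting lemma: if `A` is an integer matrix with
`det A ≠ 0`, `B = A + m·I` (with `det B ≠ 0`), and `p` is a prime not dividing
`m`, then the `p`-primary component of `ℤⁿ/Im(A·B)` is isomorphic to the
`p`-primary component of `ℤⁿ/Im A ⊕ ℤⁿ/Im B`. -/
theorem stmt18 (n : ℕ) (A : Matrix (Fin n) (Fin n) ℤ) (m : ℤ)
    (hA : A.det ≠ 0) (hB : (A + m • 1).det ≠ 0)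
    (p : ℕ) [Fact p.Prime] (hpm : ¬ (p : ℤ) ∣ m) :
    Nonempty
      ((AddCommGroup.primaryComponent
          ((Fin n → ℤ) ⧸ LinearMap.range (Matrix.toLin' (A * (A + m • 1)))) p) ≃+
        (AddCommGroup.primaryComponent
          (((Fin n → ℤ) ⧸ LinearMap.range (Matrix.toLin' A)) ×
            ((Fin n → ℤ) ⧸ LinearMap.range (Matrix.toLin' (A + m • 1)))) p)) :=
  stmt18_general n A m p hpm
end
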